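/- Let A < 0, B ≥ 0, C ≤ 0 be real constants (with strict inequalities 2A < −β for given β). Then σ(t) = e^{B̄(T−t)}(C̄/B̄ − Ā) − C̄/B̄ with Ā = max(ε_A, 2A + ε_A), B̄ = 2B + ε_B, C̄ = min(−ε_C, 2C − ε_C), for ε_A, ε_C ≥ 0 and ε_B > 0, satisfies the two strict inequalities σ(T) < −2A and (1/2)σ'(t) − |σ(t)|·B + C > 0 for all t ∈ [0, T], provided ε_A > 0 and ε_C > 0. -/

import Mathlib

/-!
σ solves the linear ODE σ' = -B̄ σ - C̄ with σ(T) = -Ā, and since e^{B̄(T-t)} ≥ 1 multiplies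
the negative constant C̄/B̄ - Ā, σ ≤ -Ā < 0 on `t ≤ T`. Hence |σ| = -σ, and with B̄ = 2B + ε_B the second expression collapses to
`-(ε_B / 2) σ + (C - C̄ / 2)`, a sum of a positive term and a term `≥ ε_C / 2`.
-/

open Real

noncomputable def sigma (a b d T t : ℝ) : ℝ := exp (b * (T - t)) * (d / b - a) - d / b

namespace sigma

variable {a b d T t : ℝ}

theorem apply_self : sigma a b d T T = -a := by
  simp [sigma]

theorem hasDerivAt (hb : b ≠ 0) :
    HasDerivAt (sigma a b d T) (-b * sigma a b d T t - d) t := by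
  have hlin : HasDerivAt (fun s : ℝ => b * (T - s)) (-b) t := by
    simpa using ((hasDerivAt_id t).const_sub T).const_mul b
  refine ((hlin.exp.mul_const (d / b - a)).sub_const (d / b)).congr_deriv ?_
  simp only [sigma]
  field_simp
  ring

theorem le_neg (hb : 0 ≤ b) (hdb : d / b ≤ a) (ht : t ≤ T) : sigma a b d T t ≤ -a := by
  have hexp : 1 ≤ exp (b * (T - t)) := one_le_exp (mul_nonneg hb (sub_nonneg.2 ht))
  have := mul_le_of_one_le_left (sub_nonpos.2 hdb) hexp
  simp only [sigma]
  linarith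

end sigma

theorem stmt_8_general (T A B C εA εB εC : ℝ)
    (hB : 0 ≤ B)
    (hεA : 0 < εA) (hεB : 0 < εB) (hεC : 0 < εC)
    (Abar Bbar Cbar : ℝ) (hAbar : Abar = max εA (2 * A + εA)) (hBbar : Bbar = 2 * B + εB)
    (hCbar : Cbar = min (-εC) (2 * C - εC))
    (σ : ℝ → ℝ)
    (hσ : ∀ t : ℝ, σ t = Real.exp (Bbar * (T - t)) * (Cbar / Bbar - Abar) - Cbar / Bbar) :
    σ T < -2 * A ∧
    ∀ t ∈ Set.Icc (0 : ℝ) T, (1 / 2) * deriv σ t - |σ t| * B + C > 0 := by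
  obtain rfl : σ = sigma Abar Bbar Cbar T := funext hσ
  have hBbar_pos : 0 < Bbar := by linarith
  have hAbar_pos : 0 < Abar := hAbar ▸ hεA.trans_le (le_max_left _ _)
  have hAbar_ge : 2 * A + εA ≤ Abar := hAbar ▸ le_max_right _ _
  have hCbar_neg : Cbar < 0 := hCbar ▸ (min_le_left _ _).trans_lt (neg_neg_of_pos hεC)
  have hCbar_le : Cbar ≤ 2 * C - εC := hCbar ▸ min_le_right _ _
  refine ⟨by rw [sigma.apply_self]; linarith, fun t ⟨_, htT⟩ => ?_⟩
  have hneg : sigma Abar Bbar Cbar T t < 0 :=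
    (sigma.le_neg hBbar_pos.le ((div_neg_of_neg_of_pos hCbar_neg hBbar_pos).le.trans
      hAbar_pos.le) htT).trans_lt (neg_neg_of_pos hAbar_pos)
  rw [(sigma.hasDerivAt hBbar_pos.ne').deriv, abs_of_neg hneg]
  generalize sigma Abar Bbar Cbar T t = s at hneg ⊢
  subst hBbar
  linarith [mul_pos hεB (neg_pos.2 hneg)]

theorem stmt_8 (T A B C εA εB εC : ℝ) (hT : 0 < T)
    (hA : A < 0) (hB : 0 ≤ B) (hC : C ≤ 0)
    (hεA : 0 < εA) (hεB : 0 < εB) (hεC : 0 < εC)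
    (Abar Bbar Cbar : ℝ) (hAbar : Abar = max εA (2 * A + εA)) (hBbar : Bbar = 2 * B + εB)
    (hCbar : Cbar = min (-εC) (2 * C - εC))
    (σ : ℝ → ℝ)
    (hσ : ∀ t : ℝ, σ t = Real.exp (Bbar * (T - t)) * (Cbar / Bbar - Abar) - Cbar / Bbar) :
    σ T < -2 * A ∧
    ∀ t ∈ Set.Icc (0 : ℝ) T, (1 / 2) * deriv σ t - |σ t| * B + C > 0 :=
  stmt_8_general T A B C εA εB εC hB hεA hεB hεC Abar Bbar Cbar hAbar hBbar hCbar σ hσ
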